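/- arXiv:2307.11625 — 11 statements merged into one kernel-verified Lean document; each statement's English description precedes it below -/
import Mathlib

section
/- A graph G is an ⟨i,j⟩ competition graph (the competition graph of some loopless digraph in which every vertex has indegree at most i and outdegree at most j) if and only if there is an edge clique cover C = {C_1,...,C_p} of G such that (i) |C_t| ≤ i for each t, (ii) each vertex of G belongs to at most j cliques of C, (iii) the family {V(G)−C_1,...,V(G)−C_p} has a system of distinct representatives, and (iv) p ≤ |V(G)|. -/
/-- The competition graph of a digraph `D`: `u` and `v` are adjacent iff they are
distinct and have a common out-neighbor. -/
def compGraph {V : Type*} (D : V → V → Prop) : SimpleGraph V where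
  Adj u v := u ≠ v ∧ ∃ w, D u w ∧ D v w
  symm := by
    constructor
    rintro u v ⟨h, w, h1, h2⟩
    exact ⟨h.symm, w, h2, h1⟩
  loopless := by
    constructor
    rintro u ⟨h, -⟩
    exact h rfl

/-- A loopless digraph with every indegree ≤ i and every outdegree ≤ j. -/
def IsIJDigraph {V : Type*} (D : V → V → Prop) (i j : ℕ) : Prop :=
  (∀ v, ¬ D v v) ∧ (∀ v, {u | D u v}.ncard ≤ i) ∧ (∀ u, {w | D u w}.ncard ≤ j)

/-- `G` is an ⟨i,j⟩ competition graph. -/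
def IsIJCompGraph {V : Type*} (G : SimpleGraph V) (i j : ℕ) : Prop :=
  ∃ D : V → V → Prop, IsIJDigraph D i j ∧ compGraph D = G

/-! An ⟨i,j⟩ digraph `D` is turned into a clique cover by taking the in-neighbourhoods
`{u | D u w}`: each is a clique of size `≤ i` of the competition graph, a vertex `v` lies in
exactly as many of them as it has out-neighbours, and looplessness says `w ∉ {u | D u w}`, so
`w` represents its own clique. Conversely, a clique cover `C` with distinct representatives
`f t ∉ C t` gives the digraph with arcs `u → f t` for `u ∈ C t`; injectivity of `f` makes the
in-neighbourhood of `f t` exactly `C t` and the out-degree of `u` the number of cliques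
containing `u`. -/

section CompetitionGraph

variable {V : Type*}

theorem isClique_compGraph_setOf (D : V → V → Prop) (w : V) :
    (compGraph D).IsClique {u | D u w} :=
  fun _ hu _ hv hne => ⟨hne, w, hu, hv⟩

theorem exists_cliqueCover_of_isIJDigraph [Fintype V] {D : V → V → Prop} {i j : ℕ}
    (hD : IsIJDigraph D i j) :
    ∃ (p : ℕ) (C : Fin p → Finset V),
      (∀ t, (compGraph D).IsClique (C t : Set V)) ∧
      (∀ u v, (compGraph D).Adj u v → ∃ t, u ∈ C t ∧ v ∈ C t) ∧
      (∀ t, (C t).card ≤ i) ∧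
      (∀ v : V, ({t | v ∈ C t} : Set (Fin p)).ncard ≤ j) ∧
      (∃ f : Fin p → V, Function.Injective f ∧ ∀ t, f t ∉ C t) ∧
      p ≤ Fintype.card V := by
  obtain ⟨hloop, hin, hout⟩ := hD
  set e := (Fintype.equivFin V).symm
  refine ⟨Fintype.card V, fun t => (Set.toFinite {u | D u (e t)}).toFinset,
    fun t => ?_, ?_, fun t => ?_, fun v => ?_, ⟨e, e.injective, fun t => ?_⟩, le_rfl⟩
  · rw [Set.Finite.coe_toFinset]
    exact isClique_compGraph_setOf D (e t)
  · rintro u v ⟨-, w, hu, hv⟩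
    refine ⟨e.symm w, ?_, ?_⟩ <;> simpa [Set.Finite.mem_toFinset]
  · rw [← Set.ncard_eq_toFinset_card]
    exact hin (e t)
  · have hpre : {t | v ∈ (Set.toFinite {u | D u (e t)}).toFinset} = e ⁻¹' {w | D v w} := by
      ext t
      simp [Set.Finite.mem_toFinset]
    rw [hpre, Set.ncard_preimage_of_injective_subset_range e.injective (by simp)]
    exact hout v
  · rw [Set.Finite.mem_toFinset]
    exact hloop (e t)

def digraphOfCliques {ι : Type*} (C : ι → Finset V) (f : ι → V) (u w : V) : Prop :=
  ∃ t, f t = w ∧ u ∈ C t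

variable {ι : Type*} {C : ι → Finset V} {f : ι → V}

theorem digraphOfCliques_irrefl (hf : ∀ t, f t ∉ C t) (v : V) : ¬ digraphOfCliques C f v v := by
  rintro ⟨t, rfl, hv⟩
  exact hf t hv

theorem setOf_digraphOfCliques_apply (hf : Function.Injective f) (t : ι) :
    {u | digraphOfCliques C f u (f t)} = C t := by
  ext u
  constructor
  · rintro ⟨t', ht', hu⟩
    rwa [hf ht'] at hu
  · exact fun hu => ⟨t, rfl, hu⟩

theorem ncard_setOf_digraphOfCliques_le {i : ℕ} (hf : Function.Injective f)
    (hC : ∀ t, (C t).card ≤ i) (w : V) : {u | digraphOfCliques C f u w}.ncard ≤ i := by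
  by_cases hw : ∃ t, f t = w
  · obtain ⟨t, rfl⟩ := hw
    rw [setOf_digraphOfCliques_apply hf, Set.ncard_coe_finset]
    exact hC t
  · have hempty : {u | digraphOfCliques C f u w} = ∅ :=
      Set.eq_empty_of_forall_notMem fun _ ⟨t, ht, _⟩ => hw ⟨t, ht⟩
    simp [hempty]

theorem ncard_digraphOfCliques_eq (hf : Function.Injective f) (u : V) :
    {w | digraphOfCliques C f u w}.ncard = {t | u ∈ C t}.ncard := by
  have himage : {w | digraphOfCliques C f u w} = f '' {t | u ∈ C t} := by
    ext w
    constructor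
    · rintro ⟨t, rfl, ht⟩
      exact ⟨t, ht, rfl⟩
    · rintro ⟨t, ht, rfl⟩
      exact ⟨t, rfl, ht⟩
  rw [himage, Set.ncard_image_of_injective _ hf]

theorem compGraph_digraphOfCliques {G : SimpleGraph V} (hf : Function.Injective f)
    (hclique : ∀ t, G.IsClique (C t : Set V))
    (hcover : ∀ u v, G.Adj u v → ∃ t, u ∈ C t ∧ v ∈ C t) :
    compGraph (digraphOfCliques C f) = G := by
  ext u v
  constructor
  · rintro ⟨hne, -, ⟨t, rfl, hu⟩, ⟨t', ht', hv⟩⟩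
    rw [hf ht'] at hv
    exact hclique t hu hv hne
  · intro h
    obtain ⟨t, hu, hv⟩ := hcover u v h
    exact ⟨h.ne, f t, ⟨t, rfl, hu⟩, ⟨t, rfl, hv⟩⟩

end CompetitionGraph

theorem stmt0_general {V : Type*} [Fintype V] (G : SimpleGraph V) (i j : ℕ) :
    IsIJCompGraph G i j ↔
      ∃ (p : ℕ) (C : Fin p → Finset V),
        (∀ t, G.IsClique (C t : Set V)) ∧
        (∀ u v, G.Adj u v → ∃ t, u ∈ C t ∧ v ∈ C t) ∧
        (∀ t, (C t).card ≤ i) ∧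
        (∀ v : V, ({t | v ∈ C t} : Set (Fin p)).ncard ≤ j) ∧
        (∃ f : Fin p → V, Function.Injective f ∧ ∀ t, f t ∉ C t) ∧
        p ≤ Fintype.card V := by
  constructor
  · rintro ⟨D, hD, rfl⟩
    exact exists_cliqueCover_of_isIJDigraph hD
  · rintro ⟨p, C, hclique, hcover, hcard, hcount, ⟨f, hf, hfC⟩, -⟩
    refine ⟨digraphOfCliques C f, ⟨digraphOfCliques_irrefl hfC,
      ncard_setOf_digraphOfCliques_le hf hcard, fun u => ?_⟩,
      compGraph_digraphOfCliques hf hclique hcover⟩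
    rw [ncard_digraphOfCliques_eq hf]
    exact hcount u

theorem stmt0 {V : Type*} [Fintype V] (G : SimpleGraph V) (i j : ℕ)
    (hi : 1 ≤ i) (hj : 1 ≤ j) :
    IsIJCompGraph G i j ↔
      ∃ (p : ℕ) (C : Fin p → Finset V),
        (∀ t, G.IsClique (C t : Set V)) ∧
        (∀ u v, G.Adj u v → ∃ t, u ∈ C t ∧ v ∈ C t) ∧
        (∀ t, (C t).card ≤ i) ∧
        (∀ v : V, ({t | v ∈ C t} : Set (Fin p)).ncard ≤ j) ∧
        (∃ f : Fin p → V, Function.Injective f ∧ ∀ t, f t ∉ C t) ∧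
        p ≤ Fintype.card V :=
  stmt0_general G i j
end

section
/- If G is the competition graph of a loopless digraph in which every vertex has indegree at most i and outdegree at most j, then |E(G)| ≤ (i−1)i/2 · |V(G)|. -/
theorem Set.ncard_image_mk_offDiag {α : Type*} {s : Set α} (hs : s.Finite) :
    (Sym2.mk.uncurry '' s.offDiag).ncard = s.ncard.choose 2 := by
  classical
  lift s to Finset α using hs
  rw [← Finset.coe_offDiag, ← Finset.coe_image, Set.ncard_coe_finset, Set.ncard_coe_finset]
  exact Sym2.card_image_offDiag s

theorem compGraph_edgeSet_eq_iUnion {V : Type*} (D : V → V → Prop) :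
    (compGraph D).edgeSet = ⋃ w, Sym2.mk.uncurry '' {u | D u w}.offDiag := by
  ext e
  induction e using Sym2.ind with
  | _ u v =>
    simp only [SimpleGraph.mem_edgeSet, compGraph, Set.mem_iUnion, Set.mem_image,
      Set.mem_offDiag, Set.mem_ofPred_eq, Prod.exists, Function.uncurry_apply_pair, Sym2.eq_iff]
    constructor
    · rintro ⟨hne, w, hu, hv⟩
      exact ⟨w, u, v, ⟨hu, hv, hne⟩, Or.inl ⟨rfl, rfl⟩⟩
    · rintro ⟨w, a, b, ⟨ha, hb, hne⟩, ⟨rfl, rfl⟩ | ⟨rfl, rfl⟩⟩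
      exacts [⟨hne, w, ha, hb⟩, ⟨Ne.symm hne, w, hb, ha⟩]

theorem compGraph_edgeSet_ncard_le_sum {V : Type*} [Fintype V] (D : V → V → Prop) :
    (compGraph D).edgeSet.ncard ≤ ∑ w, {u | D u w}.ncard.choose 2 := by
  rw [compGraph_edgeSet_eq_iUnion]
  refine (Set.ncard_iUnion_le_of_fintype _).trans_eq ?_
  simp only [Set.ncard_image_mk_offDiag (Set.toFinite _)]

theorem stmt1 {V : Type*} [Fintype V] (G : SimpleGraph V) (i j : ℕ)
    (h : IsIJCompGraph G i j) :
    G.edgeSet.ncard ≤ (i - 1) * i / 2 * Fintype.card V := by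
  obtain ⟨D, ⟨-, hin, -⟩, rfl⟩ := h
  calc (compGraph D).edgeSet.ncard
      ≤ ∑ w, {u | D u w}.ncard.choose 2 := compGraph_edgeSet_ncard_le_sum D
    _ ≤ ∑ _w : V, i.choose 2 :=
        Finset.sum_le_sum fun w _ => Nat.choose_le_choose 2 (hin w)
    _ = (i - 1) * i / 2 * Fintype.card V := by
        rw [Finset.sum_const, Finset.card_univ, smul_eq_mul, Nat.choose_two_right, mul_comm,
          Nat.mul_comm i]
end

section
/- If G is the competition graph of a loopless digraph in which every vertex has indegree at most i and outdegree at most j, then G contains no induced subgraph isomorphic to the star K_{1,j+1}. -/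
/-- A common out-neighbor of `c` and `ℓ k` is an out-neighbor of no other `ℓ k'`. -/
theorem nat_card_le_ncard_outNeighbors_of_compGraph {V ι : Type*} {D : V → V → Prop} {c : V}
    {ℓ : ι → V} (hℓ : Function.Injective ℓ) (hadj : ∀ k, (compGraph D).Adj c (ℓ k))
    (hindep : Pairwise fun a b => ¬ (compGraph D).Adj (ℓ a) (ℓ b))
    (hfin : {w | D c w}.Finite) :
    Nat.card ι ≤ {w | D c w}.ncard := by
  choose prey hc hℓprey using fun k => (hadj k).2
  have prey_injective : Function.Injective prey := by
    intro a b hab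
    by_contra hne
    exact hindep hne ⟨hℓ.ne hne, prey a, hℓprey a, hab ▸ hℓprey b⟩
  have := hfin.to_subtype
  rw [← Nat.card_coe_set_eq]
  exact Nat.card_le_card_of_injective (fun k => ⟨prey k, hc k⟩)
    fun a b hab => prey_injective (congrArg Subtype.val hab)

theorem stmt2 {V : Type*} [Fintype V] (G : SimpleGraph V) (i j : ℕ)
    (h : IsIJCompGraph G i j) :
    IsEmpty (completeBipartiteGraph (Fin 1) (Fin (j + 1)) ↪g G) := by
  obtain ⟨D, ⟨-, -, houtdeg⟩, rfl⟩ := h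
  refine ⟨fun f => ?_⟩
  have hstar := nat_card_le_ncard_outNeighbors_of_compGraph (c := f (.inl 0)) (ℓ := f ∘ .inr)
    (f.injective.comp Sum.inr_injective) (fun k => f.map_adj_iff.2 (by simp))
    (fun a b _ => by simp [f.map_adj_iff]) (Set.toFinite _)
  have := houtdeg (f (.inl 0))
  simp only [Nat.card_eq_fintype_card, Fintype.card_fin] at hstar
  omega
end

section
/- For every integer n ≥ 3 and all integers i ≥ n−1 and j ≥ 2, the complete graph K_n is the competition graph of some loopless digraph on n vertices in which every vertex has indegree at most i and outdegree at most j. -/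
/-! Fix three distinct vertices `a`, `b`, `c`. Let every vertex point to `a` and `b` (other than
itself), and let `a` and `b` also point to `c`. Two distinct vertices share the prey `a` unless one
of them is `a`; then they share `b`, unless the pair is `{a, b}`, which shares `c`. Outdegrees are
at most 2, and, the digraph being loopless, indegrees are at most `n - 1`. -/

lemma IsIJCompGraph.mono {V : Type*} {G : SimpleGraph V} {i j i' j' : ℕ}
    (hG : IsIJCompGraph G i j) (hi : i ≤ i') (hj : j ≤ j') : IsIJCompGraph G i' j' := by
  obtain ⟨D, ⟨hloop, hin, hout⟩, rfl⟩ := hG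
  exact ⟨D, ⟨hloop, fun v => (hin v).trans hi, fun u => (hout u).trans hj⟩, rfl⟩

lemma ncard_setOf_le_card_sub_one_of_irrefl {V : Type*} [Finite V] {D : V → V → Prop}
    (hloop : ∀ v, ¬ D v v) (v : V) : {u | D u v}.ncard ≤ Nat.card V - 1 := by
  have := Set.ncard_lt_card ((Set.ne_univ_iff_exists_notMem {u | D u v}).2 ⟨v, hloop v⟩)
  omega

lemma Set.ncard_pair_le {α : Type*} (a b : α) : ({a, b} : Set α).ncard ≤ 2 :=
  (Set.ncard_insert_le a {b}).trans (by rw [Set.ncard_singleton])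

section SinkPair

variable {V : Type*} (a b c : V)

def sinkPairDigraph (u w : V) : Prop :=
  u ≠ w ∧ (w = a ∨ w = b ∨ (w = c ∧ (u = a ∨ u = b)))

lemma sinkPairDigraph_irrefl (v : V) : ¬ sinkPairDigraph a b c v v :=
  fun h => h.1 rfl

lemma ncard_setOf_sinkPairDigraph_le (u : V) :
    {w | sinkPairDigraph a b c u w}.ncard ≤ 2 := by
  obtain ⟨x, y, hsub⟩ : ∃ x y : V, {w | sinkPairDigraph a b c u w} ⊆ {x, y} := by
    by_cases hua : u = a
    · exact ⟨b, c, by rintro w ⟨hne, rfl | rfl | ⟨rfl, -⟩⟩ <;> simp_all⟩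
    by_cases hub : u = b
    · exact ⟨a, c, by rintro w ⟨hne, rfl | rfl | ⟨rfl, -⟩⟩ <;> simp_all⟩
    · exact ⟨a, b, by rintro w ⟨hne, rfl | rfl | ⟨rfl, huab⟩⟩ <;> simp_all⟩
  exact (Set.ncard_le_ncard hsub (Set.toFinite _)).trans (Set.ncard_pair_le x y)

lemma compGraph_sinkPairDigraph {a b c : V} (hab : a ≠ b) (hac : a ≠ c) (hbc : b ≠ c) :
    compGraph (sinkPairDigraph a b c) = ⊤ := by
  ext u v
  simp only [compGraph, sinkPairDigraph, SimpleGraph.top_adj, and_iff_left_iff_imp]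
  intro huv
  by_cases hua : u = a
  · by_cases hvb : v = b
    · exact ⟨c, by grind⟩
    · exact ⟨b, by grind⟩
  by_cases hva : v = a
  · by_cases hub : u = b
    · exact ⟨c, by grind⟩
    · exact ⟨b, by grind⟩
  · exact ⟨a, by grind⟩

end SinkPair

lemma isIJCompGraph_top_of_ne {V : Type*} [Finite V] {a b c : V}
    (hab : a ≠ b) (hac : a ≠ c) (hbc : b ≠ c) :
    IsIJCompGraph (⊤ : SimpleGraph V) (Nat.card V - 1) 2 :=
  ⟨sinkPairDigraph a b c,
    ⟨sinkPairDigraph_irrefl a b c,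
      ncard_setOf_le_card_sub_one_of_irrefl (sinkPairDigraph_irrefl a b c),
      ncard_setOf_sinkPairDigraph_le a b c⟩,
    compGraph_sinkPairDigraph hab hac hbc⟩

theorem stmt4 (n i j : ℕ) (hn : 3 ≤ n) (hi : n - 1 ≤ i) (hj : 2 ≤ j) :
    IsIJCompGraph (⊤ : SimpleGraph (Fin n)) i j := by
  have hK := isIJCompGraph_top_of_ne (V := Fin n) (a := ⟨0, by omega⟩) (b := ⟨1, by omega⟩)
    (c := ⟨2, by omega⟩) (by simp [Fin.ext_iff]) (by simp [Fin.ext_iff]) (by simp [Fin.ext_iff])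
  rw [Nat.card_fin] at hK
  exact hK.mono hi hj
end

section
/- A graph G is an ⟨i,j⟩ competition graph for positive integers i and j if and only if (i) G is not isomorphic to K_2, (ii) if j = 1 then G is not a nontrivial complete graph, and (iii) there exists an edge clique cover {C_1,...,C_p} of G with |C_t| ≤ i for each t, each vertex in at most j of the cliques, and p ≤ |V(G)|. -/
/-!
The in-neighbourhoods of a digraph are cliques of its competition graph that cover every edge;
there are `|V|` of them, and the bounds on in- and out-degrees become the bounds on their sizes
and on the number of them containing a vertex.

Conversely, shrink a given cover until every vertex `u` of a clique `C t` has a partner `y`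
such that `C t` is the only clique containing both. If no clique is all of `V`, Hall's condition
holds for the complements of the cliques, so there are distinct vertices `f t ∉ C t`, and the arcs
`u → f t` for `u ∈ C t` realise `G`. If some clique is all of `V`, then `G` is complete on at
least three vertices and `j ≥ 2`, and an explicit digraph of out-degree two does the job.
-/

open Finset

section

variable {V ι : Type*}

def CoversEdges (G : SimpleGraph V) (C : ι → Finset V) : Prop :=
  ∀ u v, G.Adj u v → ∃ t, u ∈ C t ∧ v ∈ C t

def HasPrivatePartners (C : ι → Finset V) : Prop :=
  ∀ t, ∀ u ∈ C t, ∃ y ∈ C t, y ≠ u ∧ ∀ s, u ∈ C s → y ∈ C s → s = t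

structure IsBoundedCliqueCover (G : SimpleGraph V) (i j : ℕ) (C : ι → Finset V) : Prop where
  isClique : ∀ t, G.IsClique (C t : Set V)
  coversEdges : CoversEdges G C
  card_le : ∀ t, #(C t) ≤ i
  ncard_le : ∀ v, {t | v ∈ C t}.ncard ≤ j

theorem IsBoundedCliqueCover.mono [Finite ι] {G : SimpleGraph V} {i j : ℕ} {C C' : ι → Finset V}
    (hC : IsBoundedCliqueCover G i j C) (hle : C' ≤ C) (hC' : CoversEdges G C') :
    IsBoundedCliqueCover G i j C' where
  isClique t := (hC.isClique t).subset (coe_subset.2 (hle t))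
  coversEdges := hC'
  card_le t := (card_le_card (hle t)).trans (hC.card_le t)
  ncard_le v := (Set.ncard_le_ncard (fun t ht => hle t ht) (Set.toFinite _)).trans (hC.ncard_le v)

theorem IsBoundedCliqueCover.comp_equiv {κ : Type*} {G : SimpleGraph V} {i j : ℕ}
    {C : ι → Finset V} (hC : IsBoundedCliqueCover G i j C) (e : κ ≃ ι) :
    IsBoundedCliqueCover G i j (C ∘ e) where
  isClique t := hC.isClique (e t)
  coversEdges u v huv := by
    obtain ⟨t, hu, hv⟩ := hC.coversEdges u v huv
    exact ⟨e.symm t, by simpa using hu, by simpa using hv⟩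
  card_le t := hC.card_le (e t)
  ncard_le v := by
    rw [show {t | v ∈ (C ∘ e) t} = e ⁻¹' {t | v ∈ C t} from rfl,
      Set.ncard_preimage_of_injective_subset_range e.injective (by simp)]
    exact hC.ncard_le v

/-- A minimal cover has private partners: a vertex `u ∈ C t` without one can be deleted
from `C t`. -/
theorem CoversEdges.exists_le_hasPrivatePartners [Finite ι] [Finite V] [DecidableEq ι]
    [DecidableEq V] {G : SimpleGraph V} {C : ι → Finset V} (hC : CoversEdges G C) :
    ∃ C' ≤ C, CoversEdges G C' ∧ HasPrivatePartners C' := by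
  obtain ⟨C', hle, hcov, hmin⟩ := exists_minimal_le_of_wellFoundedLT (CoversEdges G) C hC
  refine ⟨C', hle, hcov, fun t u hu => ?_⟩
  by_contra! hno
  set C'' := Function.update C' t ((C' t).erase u)
  have hC''le : C'' ≤ C' := by
    intro s
    rcases eq_or_ne s t with rfl | hs
    · simp [C'', erase_subset]
    · simp [C'', hs]
  have hcov'' : CoversEdges G C'' := by
    intro a b hab
    obtain ⟨s, ha, hb⟩ := hcov a b hab
    by_cases hs : s = t ∧ (a = u ∨ b = u)
    · obtain ⟨rfl, hab'⟩ := hs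
      obtain ⟨s', ha', hb', hs'⟩ : ∃ s', a ∈ C' s' ∧ b ∈ C' s' ∧ s' ≠ s := by
        rcases hab' with rfl | rfl
        · exact hno b hb hab.ne'
        · obtain ⟨s', h1, h2, h3⟩ := hno a ha hab.ne
          exact ⟨s', h2, h1, h3⟩
      exact ⟨s', by simpa [C'', hs'] using ha', by simpa [C'', hs'] using hb'⟩
    · refine ⟨s, ?_, ?_⟩ <;> simp only [C'', Function.update_apply] <;> split_ifs <;> grind
  have hu'' : u ∈ C'' t := hmin hcov'' hC''le t hu
  simp [C''] at hu''

/-- Hall's condition for the complements: if `u` lies in every `C t`, `t ∈ s`, and `#s ≥ 2`,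
then the private partners of `u` are distinct and each avoids some `C t'` with `t' ∈ s`. -/
theorem HasPrivatePartners.card_le_card_biUnion_compl [Fintype ι] [Fintype V] [DecidableEq V]
    {C : ι → Finset V} (hC : HasPrivatePartners C) (hne : ∀ t, C t ≠ univ)
    (hcard : Fintype.card ι ≤ Fintype.card V) (s : Finset ι) :
    #s ≤ #(s.biUnion fun t => (C t)ᶜ) := by
  by_cases hU : s.biUnion (fun t => (C t)ᶜ) = univ
  · rw [hU, card_univ]
    exact (card_le_univ s).trans hcard
  obtain ⟨u, hu⟩ := not_forall.1 (mt eq_univ_of_forall hU)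
  have hus : ∀ t ∈ s, u ∈ C t := by simpa using hu
  obtain hs | hs := le_or_gt #s 1
  · obtain rfl | ⟨t, ht⟩ := s.eq_empty_or_nonempty
    · simp
    have hCt : (C t)ᶜ.Nonempty := by
      rw [nonempty_iff_ne_empty, Ne, compl_eq_empty_iff]
      exact hne t
    exact hs.trans (card_pos.2 (hCt.mono (subset_biUnion_of_mem _ ht)))
  have : Nonempty V := ⟨u⟩
  choose! y hyC _ hy using fun t (ht : t ∈ s) => hC t u (hus t ht)
  refine card_le_card_of_injOn y (fun t ht => ?_) (fun t ht t' ht' hyt => ?_)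
  · obtain ⟨t', ht', htt'⟩ := exists_mem_ne hs t
    exact mem_biUnion.2 ⟨t', ht', mem_compl.2 fun h => htt' (hy t ht t' (hus t' ht') h)⟩
  · exact (hy t ht t' (hus t' ht') (hyt ▸ hyC t' ht')).symm

theorem HasPrivatePartners.exists_injective_notMem [Fintype ι] [Fintype V] [DecidableEq V]
    {C : ι → Finset V} (hC : HasPrivatePartners C) (hne : ∀ t, C t ≠ univ)
    (hcard : Fintype.card ι ≤ Fintype.card V) :
    ∃ f : ι → V, Function.Injective f ∧ ∀ t, f t ∉ C t := by
  obtain ⟨f, hf, hfC⟩ := (all_card_le_biUnion_card_iff_exists_injective fun t => (C t)ᶜ).1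
    (hC.card_le_card_biUnion_compl hne hcard)
  exact ⟨f, hf, fun t => mem_compl.1 (hfC t)⟩

theorem IsIJDigraph.isBoundedCliqueCover_inNeighbors [Finite V] {D : V → V → Prop} {i j : ℕ}
    (hD : IsIJDigraph D i j) :
    IsBoundedCliqueCover (compGraph D) i j fun w => (Set.toFinite {u | D u w}).toFinset where
  isClique w u hu v hv huv := ⟨huv, w, by simpa using hu, by simpa using hv⟩
  coversEdges := fun u v ⟨_, w, hu, hv⟩ => ⟨w, by simpa using hu, by simpa using hv⟩
  card_le w := by simpa [← Set.ncard_coe_finset] using hD.2.1 w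
  ncard_le u := by simpa using hD.2.2 u

/-- The common out-neighbour of two distinct vertices is a third vertex. -/
theorem compGraph_not_iso_top_fin_two [Fintype V] {D : V → V → Prop} (hD : ∀ v, ¬ D v v) :
    ¬ Nonempty (compGraph D ≃g (⊤ : SimpleGraph (Fin 2))) := by
  rintro ⟨e⟩
  obtain ⟨huv, w, hu, hv⟩ : (compGraph D).Adj (e.symm 0) (e.symm 1) :=
    e.symm.map_adj_iff.2 (by simp)
  have hV : 2 < Fintype.card V := Fintype.two_lt_card_iff.2
    ⟨_, _, w, huv, fun h => hD w (h ▸ hu), fun h => hD w (h ▸ hv)⟩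
  simp [Fintype.card_congr e.toEquiv] at hV

/-- If `u ≠ v` have the common out-neighbour `w`, then `u` and `w` must have a common
out-neighbour too, which can only be `w` itself when `u` has out-degree one. -/
theorem IsIJDigraph.compGraph_ne_top [Finite V] [Nontrivial V] {D : V → V → Prop} {i : ℕ}
    (hD : IsIJDigraph D i 1) : compGraph D ≠ ⊤ := by
  intro htop
  obtain ⟨u, v, huv⟩ := exists_pair_ne V
  obtain ⟨-, w, huw, -⟩ : (compGraph D).Adj u v := htop ▸ huv
  have hwu : u ≠ w := fun h => hD.1 u (h ▸ huw)
  obtain ⟨-, y, huy, hwy⟩ : (compGraph D).Adj u w := htop ▸ hwu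
  have hyw : y = w := ((Set.ncard_le_one (Set.toFinite _)).1 (hD.2.2 u)) y huy w huw
  exact hD.1 w (hyw ▸ hwy)

theorem IsIJCompGraph.exists_boundedCliqueCover [Fintype V] {G : SimpleGraph V} {i j : ℕ}
    (hG : IsIJCompGraph G i j) :
    ∃ (p : ℕ) (C : Fin p → Finset V), IsBoundedCliqueCover G i j C ∧ p ≤ Fintype.card V := by
  obtain ⟨D, hD, rfl⟩ := hG
  exact ⟨_, _, hD.isBoundedCliqueCover_inNeighbors.comp_equiv (Fintype.equivFin V).symm, le_rfl⟩

theorem IsBoundedCliqueCover.isIJCompGraph {G : SimpleGraph V} {i j : ℕ}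
    {C : ι → Finset V} (hC : IsBoundedCliqueCover G i j C) {f : ι → V}
    (hf : Function.Injective f) (hfC : ∀ t, f t ∉ C t) : IsIJCompGraph G i j := by
  refine ⟨fun u w => ∃ t, f t = w ∧ u ∈ C t, ⟨?_, fun w => ?_, fun u => ?_⟩, ?_⟩
  · rintro _ ⟨t, rfl, ht⟩
    exact hfC t ht
  · by_cases hw : w ∈ Set.range f
    · obtain ⟨t, rfl⟩ := hw
      have hin : {u | ∃ s, f s = f t ∧ u ∈ C s} = C t := by ext u; simp [hf.eq_iff]
      rw [hin, Set.ncard_coe_finset]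
      exact hC.card_le t
    · have hin : {u | ∃ s, f s = w ∧ u ∈ C s} = ∅ := by
        ext u; simp only [Set.mem_range, not_exists] at hw; simp [hw]
      simp [hin]
  · have hout : {w | ∃ t, f t = w ∧ u ∈ C t} = f '' {t | u ∈ C t} := by ext w; simp [and_comm]
    rw [hout, Set.ncard_image_of_injective _ hf]
    exact hC.ncard_le u
  · ext u v
    refine ⟨fun ⟨huv, _, ⟨t, rfl, hu⟩, ⟨s, hst, hv⟩⟩ => ?_, fun huv => ?_⟩
    · exact hC.isClique t hu (hf hst ▸ hv) huv
    · obtain ⟨t, hu, hv⟩ := hC.coversEdges u v huv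
      exact ⟨huv.ne, f t, ⟨t, rfl, hu⟩, ⟨t, rfl, hv⟩⟩

/-- Given distinct `a, b, c`, every vertex points to the first two of `a, b, c` other than
itself; any two of these two-element sets meet. -/
theorem isIJCompGraph_top [Fintype V] {i j : ℕ} (hV : 2 < Fintype.card V)
    (hi : Fintype.card V ≤ i) (hj : 2 ≤ j) : IsIJCompGraph (⊤ : SimpleGraph V) i j := by
  classical
  obtain ⟨a, b, c, hab, hac, hbc⟩ := Fintype.two_lt_card_iff.1 hV
  let g : V → V := fun u => if u = a then b else a
  let h : V → V := fun u => if u = a ∨ u = b then c else b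
  refine ⟨fun u w => w = g u ∨ w = h u, ⟨fun u => ?_, fun w => ?_, fun u => ?_⟩, ?_⟩
  · simp only [g, h]
    split_ifs <;> grind
  · exact (Set.ncard_le_card _).trans (by simpa using hi)
  · calc {w | w = g u ∨ w = h u}.ncard = ({g u, h u} : Set V).ncard := rfl
      _ ≤ 2 := (Set.ncard_insert_le _ _).trans (by simp)
      _ ≤ j := hj
  · ext u v
    simp only [compGraph, SimpleGraph.top_adj, g, h, and_iff_left_iff_imp]
    intro huv
    refine ⟨if u ≠ a ∧ v ≠ a then a else if u ≠ b ∧ v ≠ b then b else c, ?_, ?_⟩ <;>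
      split_ifs <;> grind

theorem IsBoundedCliqueCover.isIJCompGraph_of_card_le [Fintype V] {G : SimpleGraph V}
    {i j p : ℕ} (hj : 1 ≤ j) (hK2 : ¬ Nonempty (G ≃g (⊤ : SimpleGraph (Fin 2))))
    (hcomplete : j = 1 → ¬ (G = ⊤ ∧ 2 ≤ Fintype.card V)) {C : Fin p → Finset V}
    (hC : IsBoundedCliqueCover G i j C) (hp : p ≤ Fintype.card V) : IsIJCompGraph G i j := by
  classical
  obtain ⟨C', hle, hcov, hpart⟩ := hC.coversEdges.exists_le_hasPrivatePartners
  have hC' := hC.mono hle hcov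
  by_cases htop : ∃ t, C' t = univ
  · obtain ⟨t, ht⟩ := htop
    have hG : G = ⊤ := SimpleGraph.isClique_univ.1 (by simpa [ht] using hC'.isClique t)
    obtain ⟨u⟩ : Nonempty V := Fintype.card_pos_iff.1 (t.pos.trans_le hp)
    obtain ⟨y, -, hyu, -⟩ := hpart t u (ht ▸ mem_univ u)
    have h2 : 2 ≤ Fintype.card V := Fintype.one_lt_card_iff.2 ⟨y, u, hyu⟩
    have h3 : 2 < Fintype.card V := by
      refine h2.lt_of_ne fun h => hK2 ⟨?_⟩
      rw [hG]
      exact SimpleGraph.Iso.completeGraph (Fintype.equivFinOfCardEq h.symm)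
    have hj2 : 2 ≤ j := by
      by_contra! hj2
      exact hcomplete (by omega) ⟨hG, h2⟩
    subst hG
    exact isIJCompGraph_top h3 (by simpa [ht] using hC'.card_le t) hj2
  · simp only [not_exists] at htop
    obtain ⟨f, hf, hfC⟩ := hpart.exists_injective_notMem htop (by simpa using hp)
    exact hC'.isIJCompGraph hf hfC

end

theorem stmt7_general {V : Type*} [Fintype V] (G : SimpleGraph V) (i j : ℕ)
    (hj : 1 ≤ j) :
    IsIJCompGraph G i j ↔
      (¬ Nonempty (G ≃g (⊤ : SimpleGraph (Fin 2)))) ∧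
      (j = 1 → ¬ (G = ⊤ ∧ 2 ≤ Fintype.card V)) ∧
      (∃ (p : ℕ) (C : Fin p → Finset V),
        (∀ t, G.IsClique (C t : Set V)) ∧
        (∀ u v, G.Adj u v → ∃ t, u ∈ C t ∧ v ∈ C t) ∧
        (∀ t, (C t).card ≤ i) ∧
        (∀ v : V, ({t | v ∈ C t} : Set (Fin p)).ncard ≤ j) ∧
        p ≤ Fintype.card V) := by
  constructor
  · intro hG
    obtain ⟨p, C, hC, hp⟩ := hG.exists_boundedCliqueCover
    obtain ⟨D, hD, rfl⟩ := hG
    refine ⟨compGraph_not_iso_top_fin_two hD.1, fun hj1 ⟨htop, hV⟩ => ?_,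
      p, C, hC.isClique, hC.coversEdges, hC.card_le, hC.ncard_le, hp⟩
    have : Nontrivial V := Fintype.one_lt_card_iff_nontrivial.1 hV
    exact (hj1 ▸ hD).compGraph_ne_top htop
  · rintro ⟨hK2, hcomplete, p, C, hclique, hcov, hcard, hncard, hp⟩
    exact IsBoundedCliqueCover.isIJCompGraph_of_card_le hj hK2 hcomplete
      ⟨hclique, hcov, hcard, hncard⟩ hp

theorem stmt7 {V : Type*} [Fintype V] (G : SimpleGraph V) (i j : ℕ)
    (hi : 1 ≤ i) (hj : 1 ≤ j) :
    IsIJCompGraph G i j ↔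
      (¬ Nonempty (G ≃g (⊤ : SimpleGraph (Fin 2)))) ∧
      (j = 1 → ¬ (G = ⊤ ∧ 2 ≤ Fintype.card V)) ∧
      (∃ (p : ℕ) (C : Fin p → Finset V),
        (∀ t, G.IsClique (C t : Set V)) ∧
        (∀ u v, G.Adj u v → ∃ t, u ∈ C t ∧ v ∈ C t) ∧
        (∀ t, (C t).card ≤ i) ∧
        (∀ v : V, ({t | v ∈ C t} : Set (Fin p)).ncard ≤ j) ∧
        p ≤ Fintype.card V) :=
  stmt7_general G i j hj
end

section
/- If G is the competition graph of a loopless digraph in which every vertex has indegree at most i and outdegree at most j, then the clique number of G satisfies ω(G) ≤ ij − j + 1 = j(i−1)+1. -/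
/-!
Fix a vertex `u` of a clique `s` of `C(D)`. Every other vertex of `s` is an in-neighbor of
some out-neighbor `w` of `u`, and each such `w` has at most `i - 1` in-neighbors besides `u`.
As `u` has at most `j` out-neighbors, `#s - 1 ≤ j (i - 1)`.
-/

open Finset

namespace compGraph

variable {V : Type*} [Fintype V] {D : V → V → Prop}

theorem subset_biUnion_inNeighbors [DecidableEq V] [DecidableRel D] {s : Finset V}
    (hs : (compGraph D).IsClique (s : Set V)) {u : V} (hu : u ∈ s) :
    s.erase u ⊆ ({w | D u w} : Finset V).biUnion fun w => ({v | D v w} : Finset V).erase u := by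
  intro v hv
  obtain ⟨hvu, hvs⟩ := mem_erase.mp hv
  obtain ⟨-, w, huw, hvw⟩ := hs hu hvs (Ne.symm hvu)
  simp only [mem_biUnion, mem_erase, mem_filter, mem_univ, true_and]
  exact ⟨w, huw, hvu, hvw⟩

theorem card_le_of_isClique {i j : ℕ} (hin : ∀ v, {u | D u v}.ncard ≤ i)
    (hout : ∀ u, {w | D u w}.ncard ≤ j) {s : Finset V}
    (hs : (compGraph D).IsClique (s : Set V)) : #s ≤ (i - 1) * j + 1 := by
  classical
  rcases s.eq_empty_or_nonempty with rfl | ⟨u, hu⟩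
  · simp
  have card_filter_le {p : V → Prop} [DecidablePred p] {n : ℕ} (h : {x | p x}.ncard ≤ n) :
      #({x | p x} : Finset V) ≤ n := by
    rwa [← Set.ncard_coe_finset, coe_filter_univ]
  have card_erase_inNeighbors_le {w : V} (huw : D u w) :
      #(({v | D v w} : Finset V).erase u) ≤ i - 1 := by
    rw [card_erase_of_mem (by simpa using huw)]
    exact Nat.sub_le_sub_right (card_filter_le (hin w)) 1
  calc #s = #(s.erase u) + 1 := (card_erase_add_one hu).symm
    _ ≤ #(({w | D u w} : Finset V).biUnion fun w => ({v | D v w} : Finset V).erase u) + 1 := by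
      gcongr
      exact subset_biUnion_inNeighbors hs hu
    _ ≤ ∑ w ∈ ({w | D u w} : Finset V), (i - 1) + 1 := by
      gcongr
      refine card_biUnion_le.trans (sum_le_sum fun w hw => ?_)
      exact card_erase_inNeighbors_le (mem_filter.mp hw).2
    _ ≤ (i - 1) * j + 1 := by
      rw [sum_const, smul_eq_mul, mul_comm]
      gcongr
      exact card_filter_le (hout u)

end compGraph

theorem stmt8_general {V : Type*} [Fintype V] (G : SimpleGraph V) (i j : ℕ)
    (h : IsIJCompGraph G i j) :
    G.cliqueNum ≤ i * j - j + 1 := by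
  obtain ⟨D, ⟨-, hin, hout⟩, rfl⟩ := h
  obtain ⟨s, hs⟩ := (compGraph D).exists_isNClique_cliqueNum
  rw [← hs.card_eq, ← Nat.sub_one_mul]
  exact compGraph.card_le_of_isClique hin hout hs.isClique

theorem stmt8 {V : Type*} [Fintype V] (G : SimpleGraph V) (i j : ℕ)
    (hi : 1 ≤ i) (hj : 1 ≤ j) (h : IsIJCompGraph G i j) :
    G.cliqueNum ≤ i * j - j + 1 :=
  stmt8_general G i j h
end

section
/- For every positive integer j, there exists a ⟨2,j⟩ competition graph with clique number exactly j+1. -/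
/-!
The competition graph of the vertex–edge incidence digraph of a graph `H` is `H` together with
isolated vertices: an edge has at most two heads pointing to it, and a vertex points to as many
edges as its degree. Taking `H = K_{j+1}` gives a ⟨2,j⟩ competition graph containing a
`(j+1)`-clique, and no larger clique since it is `(j+1)`-colorable.
-/

open SimpleGraph

theorem IsIJCompGraph.of_iso {V W : Type*} {G : SimpleGraph V} {G' : SimpleGraph W} {i j : ℕ}
    (e : G ≃g G') (hG : IsIJCompGraph G i j) : IsIJCompGraph G' i j := by
  obtain ⟨D, ⟨hloop, hin, hout⟩, rfl⟩ := hG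
  refine ⟨fun x y => D (e.symm x) (e.symm y), ⟨fun x => hloop _, fun v => ?_, fun u => ?_⟩, ?_⟩
  · have : ({u | D (e.symm u) (e.symm v)} : Set W) = e.symm ⁻¹' {u | D u (e.symm v)} := rfl
    rw [this, Set.ncard_preimage_of_injective_subset_range e.symm.injective (by simp)]
    exact hin _
  · have : ({w | D (e.symm u) (e.symm w)} : Set W) = e.symm ⁻¹' {w | D (e.symm u) w} := rfl
    rw [this, Set.ncard_preimage_of_injective_subset_range e.symm.injective (by simp)]
    exact hout _
  · ext x y
    rw [← e.symm.map_adj_iff]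
    exact and_congr e.symm.injective.ne_iff.symm
      (e.symm.surjective.exists (p := fun w => D (e.symm x) w ∧ D (e.symm y) w)).symm

namespace SimpleGraph

variable {V : Type*}

theorem cliqueNum_eq_of_embedding_of_colorable [Finite V] {G : SimpleGraph V} {n : ℕ}
    (f : (⊤ : SimpleGraph (Fin n)) ↪g G) (hc : G.Colorable n) : G.cliqueNum = n := by
  refine le_antisymm ?_ ?_
  · exact_mod_cast G.cliqueNum_le_chromaticNumber.trans hc.chromaticNumber_le
  · have hclique : G.IsClique (Finset.univ.map f.toEmbedding : Finset V) := by
      intro x hx y hy hxy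
      simp only [Finset.coe_map, Finset.coe_univ, Set.image_univ, Set.mem_range] at hx hy
      obtain ⟨a, rfl⟩ := hx
      obtain ⟨b, rfl⟩ := hy
      exact f.map_adj_iff.2 ((top_adj _ _).2 fun hab => hxy (congrArg f hab))
    simpa using hclique.card_le_cliqueNum

def incidenceDigraph (H : SimpleGraph V) : V ⊕ Sym2 V → V ⊕ Sym2 V → Prop
  | .inl v, .inr e => e ∈ H.incidenceSet v
  | _, _ => False

theorem ncard_setOf_incidenceDigraph_le_two (H : SimpleGraph V) (w : V ⊕ Sym2 V) :
    {u | H.incidenceDigraph u w}.ncard ≤ 2 := by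
  rcases w with v | e
  · simp [incidenceDigraph]
  · induction e using Sym2.ind with
    | _ a b =>
      have hsub : {u | H.incidenceDigraph u (.inr s(a, b))} ⊆ {.inl a, .inl b} := by
        rintro (v | f) h
        · simpa [incidenceDigraph, incidenceSet] using h.2
        · exact h.elim
      exact (Set.ncard_le_ncard hsub).trans ((Set.ncard_insert_le _ _).trans (by simp))

theorem ncard_setOf_incidenceDigraph_inl (H : SimpleGraph V) (v : V) :
    {w | H.incidenceDigraph (.inl v) w}.ncard = (H.neighborSet v).ncard := by
  classical
  have : {w | H.incidenceDigraph (.inl v) w} = Sum.inr '' H.incidenceSet v := by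
    ext (u | e) <;> simp [incidenceDigraph]
  rw [this, Set.ncard_image_of_injective _ Sum.inr_injective]
  exact Set.ncard_congr' (H.incidenceSetEquivNeighborSet v)

theorem isIJDigraph_incidenceDigraph (H : SimpleGraph V) {j : ℕ}
    (hdeg : ∀ v, (H.neighborSet v).ncard ≤ j) : IsIJDigraph H.incidenceDigraph 2 j := by
  refine ⟨?_, H.ncard_setOf_incidenceDigraph_le_two, ?_⟩
  · rintro (v | e) <;> exact id
  · rintro (v | e)
    · exact (H.ncard_setOf_incidenceDigraph_inl v).trans_le (hdeg v)
    · simp [incidenceDigraph]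

theorem compGraph_incidenceDigraph (H : SimpleGraph V) :
    compGraph H.incidenceDigraph = H ⊕g (⊥ : SimpleGraph (Sym2 V)) := by
  ext (u | f) (v | g)
  · refine .trans ?_ (sum_adj_inl.trans H.adj_iff_exists_edge).symm
    refine and_congr Sum.inl_injective.ne_iff ?_
    simp only [Sum.exists, incidenceDigraph, incidenceSet, Set.mem_ofPred_eq, and_false,
      exists_false, false_or]
    exact exists_congr fun e => by tauto
  all_goals simp [compGraph, incidenceDigraph]

theorem isIJCompGraph_sum_bot (H : SimpleGraph V) {j : ℕ}
    (hdeg : ∀ v, (H.neighborSet v).ncard ≤ j) :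
    IsIJCompGraph (H ⊕g (⊥ : SimpleGraph (Sym2 V))) 2 j :=
  ⟨_, H.isIJDigraph_incidenceDigraph hdeg, H.compGraph_incidenceDigraph⟩

end SimpleGraph

theorem stmt11_general (j : ℕ) :
    ∃ (n : ℕ) (G : SimpleGraph (Fin n)),
      IsIJCompGraph G 2 j ∧ G.cliqueNum = j + 1 := by
  let H : SimpleGraph (Fin (j + 1) ⊕ Sym2 (Fin (j + 1))) := ⊤ ⊕g ⊥
  let φ := Iso.map (Fintype.equivFin _) H
  refine ⟨_, H.map (Fintype.equivFin _).toEmbedding, ?_, ?_⟩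
  · refine IsIJCompGraph.of_iso φ (isIJCompGraph_sum_bot ⊤ fun v => ?_)
    rw [neighborSet_top, Set.ncard_compl]
    simp
  · refine cliqueNum_eq_of_embedding_of_colorable (φ.toEmbedding.comp Embedding.sumInl) ?_
    have hH : H.Colorable (j + 1) := colorable_sum.2
      ⟨(colorable_of_fintype ⊤).mono (by simp), (colorable_one_iff.2 rfl).mono (by omega)⟩
    exact hH.of_hom φ.symm.toHom

theorem stmt11 (j : ℕ) (hj : 1 ≤ j) :
    ∃ (n : ℕ) (G : SimpleGraph (Fin n)),
      IsIJCompGraph G 2 j ∧ G.cliqueNum = j + 1 :=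
  stmt11_general j
end

section
/- Let D be a loopless digraph in which every vertex has indegree at most i and outdegree at most j, and let G be its competition graph. If D contains no subdigraph D' that (a) is loopless with every vertex of indegree 0 or 2 and outdegree 0 or 2, (b) is irredundant (no two vertices have two common out-neighbors in D'), (c) induces no triangle in its competition graph, and (d) has at least one arc, then G is chordal. -/
/-- A graph is chordal iff it has no induced cycle (hole) of length at least 4. -/
def IsChordal {V : Type*} (G : SimpleGraph V) : Prop :=
  ∀ n, 4 ≤ n → IsEmpty (SimpleGraph.cycleGraph n ↪g G)

/-- `D'` is a ⟨2̄,2̄⟩ good digraph: every indegree and outdegree is 0 or 2,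
it is irredundant, its competition graph is triangle-free, and it has an arc. -/
def IsGoodDigraph {V : Type*} (D : V → V → Prop) : Prop :=
  (∀ v, ¬ D v v) ∧
  (∀ v, {u | D u v}.ncard = 0 ∨ {u | D u v}.ncard = 2) ∧
  (∀ u, {w | D u w}.ncard = 0 ∨ {w | D u w}.ncard = 2) ∧
  (∀ u v, u ≠ v → {w | D u w ∧ D v w}.ncard ≤ 1) ∧
  (compGraph D).CliqueFree 3 ∧
  (∃ u v, D u v)


/-!
Let `v₀ v₁ … vₙ₋₁` (`n ≥ 4`) be a hole of `C(D)` and pick a common out-neighbour `wₖ` of `vₖ`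
and `vₖ₊₁`. The vertices of the hole pointing to a fixed vertex form a clique of the hole, i.e.
at most an edge of it, so the `wₖ` are pairwise distinct. The arcs `vₖ → wₖ`, `vₖ₊₁ → wₖ` then
form a ⟨2̄,2̄⟩ subdigraph of `D` whose competition graph is the hole itself; in particular it is
irredundant and triangle-free, contradicting the hypothesis.
-/

open SimpleGraph Function Fin.CommRing

theorem SimpleGraph.IsClique.ncard_lt_of_cliqueFree {α : Type*} [Finite α] {G : SimpleGraph α}
    {s : Set α} {n : ℕ} (hs : G.IsClique s) (hG : G.CliqueFree n) : s.ncard < n := by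
  by_contra! h
  obtain ⟨t, hts, rfl⟩ := Set.exists_subset_card_eq h
  refine hG t.toFinite.toFinset ⟨?_, ?_⟩
  · simpa using hs.subset hts
  · exact (Set.ncard_eq_toFinset_card t).symm

theorem Fin.eq_of_pair_eq_pair_add_one {n : ℕ} [NeZero n] (hn : 3 ≤ n) {k l : Fin n}
    (h : ({k, k + 1} : Set (Fin n)) = {l, l + 1}) : k = l := by
  have h2 : (2 : Fin n) ≠ 0 := by
    simp [Fin.ext_iff, Nat.mod_eq_of_lt (show 2 < n by omega)]
  rcases Set.pair_eq_pair_iff.mp h with ⟨hkl, -⟩ | ⟨hkl, hlk⟩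
  · exact hkl
  · exact absurd (by linear_combination (exp := 1) hlk - hkl) h2

theorem cycleGraph_adj_iff {n : ℕ} [NeZero n] (hn : 2 ≤ n) {p q : Fin n} :
    (cycleGraph n).Adj p q ↔ p = q + 1 ∨ q = p + 1 := by
  have h1 : (1 : Fin n).val = 1 := by rw [Fin.val_one', Nat.mod_eq_of_lt hn]
  rw [cycleGraph_adj', ← h1, Fin.val_inj, Fin.val_inj, sub_eq_iff_eq_add, sub_eq_iff_eq_add,
    add_comm q, add_comm p]

theorem cycleGraph_adj_add_one {n : ℕ} [NeZero n] (hn : 2 ≤ n) (k : Fin n) :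
    (cycleGraph n).Adj k (k + 1) :=
  (cycleGraph_adj_iff hn).mpr (Or.inr rfl)

theorem cycleGraph_cliqueFree_three {n : ℕ} (hn : 4 ≤ n) : (cycleGraph n).CliqueFree 3 := by
  have : NeZero n := ⟨by omega⟩
  have h3 : (3 : Fin n) ≠ 0 := by
    simp [Fin.ext_iff, Nat.mod_eq_of_lt (show 3 < n by omega)]
  intro s hs
  obtain ⟨a, b, c, hab, hac, hbc, rfl⟩ := is3Clique_iff.mp hs
  have hab' := (cycleGraph_adj_iff (by omega)).mp hab
  have hac' := (cycleGraph_adj_iff (by omega)).mp hac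
  have hbc' := (cycleGraph_adj_iff (by omega)).mp hbc
  grind

section Competition

variable {V : Type*} {D : V → V → Prop}

theorem isClique_setOf_apply_embedding {W : Type*} {G : SimpleGraph W}
    (f : G ↪g compGraph D) (x : V) : G.IsClique {p | D (f p) x} :=
  fun _ hp _ hq hpq => f.map_rel_iff.mp ⟨f.injective.ne hpq, x, hp, hq⟩

theorem injective_commonOutNeighbor_of_hole {n : ℕ} [NeZero n] (hn : 4 ≤ n)
    (f : cycleGraph n ↪g compGraph D) {w : Fin n → V}
    (hw : ∀ k, D (f k) (w k) ∧ D (f (k + 1)) (w k)) : Injective w := by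
  intro k l hkl
  set S := {p | D (f p) (w k)}
  have hS : S.ncard ≤ 2 := Nat.lt_succ_iff.mp <|
    (isClique_setOf_apply_embedding f (w k)).ncard_lt_of_cliqueFree
      (cycleGraph_cliqueFree_three hn)
  have hedge : ∀ m, D (f m) (w k) → D (f (m + 1)) (w k) → ({m, m + 1} : Set (Fin n)) = S := by
    intro m hm hm'
    refine Set.eq_of_subset_of_ncard_le (Set.pair_subset hm hm') ?_
    rw [Set.ncard_pair (cycleGraph_adj_add_one (by omega) m).ne]
    exact hS
  refine Fin.eq_of_pair_eq_pair_add_one (by omega) ((hedge k (hw k).1 (hw k).2).trans ?_)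
  exact (hedge l (hkl ▸ (hw l).1) (hkl ▸ (hw l).2)).symm

end Competition

/-- For a hole `f` of `compGraph D` and common out-neighbours `w k` of `f k` and `f (k + 1)`,
the subdigraph of `D` witnessing the hole. -/
def holeDigraph {V : Type*} {n : ℕ} [NeZero n] (f w : Fin n → V) : V → V → Prop :=
  fun u x => ∃ k, x = w k ∧ (u = f k ∨ u = f (k + 1))

namespace holeDigraph

variable {V : Type*} {n : ℕ} [NeZero n] {f w : Fin n → V}

theorem setOf_apply_eq_pair (hw : Injective w) (k : Fin n) :
    {u | holeDigraph f w u (w k)} = {f k, f (k + 1)} := by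
  ext u
  constructor
  · rintro ⟨l, hl, hu⟩
    rwa [hw hl]
  · intro hu
    exact ⟨k, rfl, hu⟩

theorem setOf_apply_eq_empty (x : V) (hx : x ∉ Set.range w) : {u | holeDigraph f w u x} = ∅ :=
  Set.eq_empty_of_forall_notMem fun _ ⟨k, hk, _⟩ => hx ⟨k, hk.symm⟩

theorem setOf_eq_pair (hf : Injective f) (m : Fin n) :
    {x | holeDigraph f w (f m) x} = {w m, w (m - 1)} := by
  ext x
  constructor
  · rintro ⟨k, rfl, hk | hk⟩
    · exact Or.inl (by rw [hf hk])
    · exact Or.inr (by rw [hf hk, add_sub_cancel_right]; rfl)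
  · rintro (rfl | rfl)
    · exact ⟨m, rfl, Or.inl rfl⟩
    · exact ⟨m - 1, rfl, Or.inr (by rw [sub_add_cancel])⟩

theorem setOf_eq_empty (u : V) (hu : u ∉ Set.range f) : {x | holeDigraph f w u x} = ∅ :=
  Set.eq_empty_of_forall_notMem fun _ ⟨k, _, hk⟩ =>
    hu (hk.elim (fun h => ⟨k, h.symm⟩) fun h => ⟨k + 1, h.symm⟩)

theorem ncard_setOf_apply (hn : 2 ≤ n) (hf : Injective f) (hw : Injective w) (x : V) :
    {u | holeDigraph f w u x}.ncard = 0 ∨ {u | holeDigraph f w u x}.ncard = 2 := by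
  by_cases hx : x ∈ Set.range w
  · obtain ⟨k, rfl⟩ := hx
    have h1 : (1 : Fin n) ≠ 0 := by rw [Ne, Fin.one_eq_zero_iff]; omega
    rw [setOf_apply_eq_pair hw, Set.ncard_pair (hf.ne (left_ne_add.mpr h1))]
    exact Or.inr rfl
  · rw [setOf_apply_eq_empty x hx, Set.ncard_empty]
    exact Or.inl rfl

theorem ncard_setOf (hn : 2 ≤ n) (hf : Injective f) (hw : Injective w) (u : V) :
    {x | holeDigraph f w u x}.ncard = 0 ∨ {x | holeDigraph f w u x}.ncard = 2 := by
  by_cases hu : u ∈ Set.range f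
  · obtain ⟨m, rfl⟩ := hu
    have h1 : (1 : Fin n) ≠ 0 := by rw [Ne, Fin.one_eq_zero_iff]; omega
    rw [setOf_eq_pair hf, Set.ncard_pair (hw.ne (Ne.symm (sub_eq_self.not.mpr h1)))]
    exact Or.inr rfl
  · rw [setOf_eq_empty u hu, Set.ncard_empty]
    exact Or.inl rfl

theorem pair_eq_of_apply (hw : Injective w) {u v x : V} (huv : u ≠ v)
    (hu : holeDigraph f w u x) (hv : holeDigraph f w v x) :
    ∃ k, x = w k ∧ ({u, v} : Set V) = {f k, f (k + 1)} := by
  obtain ⟨k, rfl, -⟩ := id hu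
  refine ⟨k, rfl, Set.eq_of_subset_of_ncard_le ?_ ?_⟩
  · rw [← setOf_apply_eq_pair hw]
    exact Set.pair_subset hu hv
  · rw [Set.ncard_pair huv]
    exact (Set.ncard_insert_le _ _).trans (by rw [Set.ncard_singleton])

theorem ncard_setOf_and_le_one (hn : 3 ≤ n) (hf : Injective f) (hw : Injective w) {u v : V}
    (huv : u ≠ v) : {x | holeDigraph f w u x ∧ holeDigraph f w v x}.ncard ≤ 1 := by
  have hfin : {x | holeDigraph f w u x ∧ holeDigraph f w v x}.Finite :=
    (Set.finite_range w).subset fun _ ⟨⟨k, hk, _⟩, _⟩ => ⟨k, hk.symm⟩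
  refine (Set.ncard_le_one_iff hfin).mpr fun ⟨hux, hvx⟩ ⟨huy, hvy⟩ => ?_
  obtain ⟨k, rfl, hk⟩ := pair_eq_of_apply hw huv hux hvx
  obtain ⟨l, rfl, hl⟩ := pair_eq_of_apply hw huv huy hvy
  rw [hk, ← Set.image_pair, ← Set.image_pair] at hl
  rw [Fin.eq_of_pair_eq_pair_add_one hn (Set.image_injective.mpr hf hl)]

theorem compGraph_le_map (hn : 2 ≤ n) (hf : Injective f) (hw : Injective w) :
    compGraph (holeDigraph f w) ≤ (cycleGraph n).map (Embedding.mk f hf) := by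
  intro u v huv
  obtain ⟨huv, x, hux, hvx⟩ := huv
  rw [map_adj]
  obtain ⟨k, -, hk⟩ := pair_eq_of_apply hw huv hux hvx
  rcases Set.pair_eq_pair_iff.mp hk with ⟨rfl, rfl⟩ | ⟨rfl, rfl⟩
  · exact ⟨k, k + 1, cycleGraph_adj_add_one hn k, rfl, rfl⟩
  · exact ⟨k + 1, k, (cycleGraph_adj_add_one hn k).symm, rfl, rfl⟩

theorem isGoodDigraph (hn : 4 ≤ n) (hf : Injective f) (hw : Injective w)
    (hloop : ∀ v, ¬ holeDigraph f w v v) : IsGoodDigraph (holeDigraph f w) :=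
  ⟨hloop, ncard_setOf_apply (by omega) hf hw, ncard_setOf (by omega) hf hw,
    fun _ _ => ncard_setOf_and_le_one (by omega) hf hw,
    (cliqueFree_map_iff.mpr (cycleGraph_cliqueFree_three hn)).anti
      (compGraph_le_map (by omega) hf hw),
    f 0, w 0, 0, rfl, Or.inl rfl⟩

end holeDigraph

theorem stmt12_general {V : Type*} (D : V → V → Prop) (i j : ℕ)
    (hD : IsIJDigraph D i j)
    (hno : ∀ D' : V → V → Prop, (∀ u v, D' u v → D u v) → ¬ IsGoodDigraph D') :
    IsChordal (compGraph D) := by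
  intro n hn
  refine ⟨fun f => ?_⟩
  have : NeZero n := ⟨by omega⟩
  choose w hw using fun k => (f.map_rel_iff.mpr (cycleGraph_adj_add_one (by omega) k)).2
  have hsub : ∀ u x, holeDigraph f w u x → D u x := by
    rintro u x ⟨k, rfl, rfl | rfl⟩
    exacts [(hw k).1, (hw k).2]
  have hw_inj := injective_commonOutNeighbor_of_hole hn f hw
  exact hno _ hsub <| holeDigraph.isGoodDigraph hn f.injective hw_inj
    fun v hv => hD.1 v (hsub v v hv)

theorem stmt12 {V : Type*} [Fintype V] (D : V → V → Prop) (i j : ℕ)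
    (hD : IsIJDigraph D i j)
    (hno : ∀ D' : V → V → Prop, (∀ u v, D' u v → D u v) → ¬ IsGoodDigraph D') :
    IsChordal (compGraph D) :=
  stmt12_general D i j hD hno
end

section
/- Let i, j, k, l, m, n be positive integers with i, j ≥ 2, j > l, and (i−1)j > (m−1)n. Then there exists a graph that is an ⟨i,j⟩ competition graph but is neither a ⟨k,l⟩ competition graph nor an ⟨m,n⟩ competition graph. (In particular, the graph obtained from the star K_{1,j} by replacing each edge at the center with a complete graph on i vertices containing the center works.) -/
/-!
`G*_{i,j}` is the competition graph of the digraph in which every clique (centre included) points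
at one non-central vertex of the next clique in cyclic order; there every in-degree is at most `i`
and every out-degree at most `j`.

In a competition graph of a digraph with out-degrees at most `l`, pairwise non-adjacent neighbours
of a vertex `v` share pairwise distinct out-neighbours of `v` with it, so there are at most `l` of
them; the centre of `G*_{i,j}` has `j` such neighbours. With in-degrees at most `m` and
out-degrees at most `n`, every neighbour of `v` is one of the at most `m - 1` other in-neighbours
of one of the at most `n` out-neighbours of `v`, so `v` has degree at most `(m - 1) n`; the centre
of `G*_{i,j}` has degree `(i - 1) j`.
-/

open Set

section General

variable {V W : Type*} {G : SimpleGraph V} {H : SimpleGraph W} {a b : ℕ}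

lemma compGraph_adj {D : V → V → Prop} {u v : V} :
    (compGraph D).Adj u v ↔ u ≠ v ∧ ∃ w, D u w ∧ D v w :=
  Iff.rfl

lemma IsIJCompGraph.of_iso_s16 (f : G ≃g H) (h : IsIJCompGraph H a b) : IsIJCompGraph G a b := by
  obtain ⟨D, ⟨hloop, hin, hout⟩, rfl⟩ := h
  have hcard (s : Set W) : (f ⁻¹' s).ncard = s.ncard :=
    ncard_preimage_of_injective_subset_range f.injective (by simp)
  refine ⟨fun x y => D (f x) (f y), ⟨fun v => hloop (f v), fun v => ?_, fun u => ?_⟩, ?_⟩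
  · exact (hcard {u | D u (f v)}).trans_le (hin (f v))
  · exact (hcard {w | D (f u) w}).trans_le (hout (f u))
  · ext x y
    rw [← f.map_adj_iff]
    exact and_congr f.injective.ne_iff.symm
      (f.surjective.exists (p := fun w => D (f x) w ∧ D (f y) w)).symm

lemma SimpleGraph.Iso.isIJCompGraph_iff (f : G ≃g H) :
    IsIJCompGraph G a b ↔ IsIJCompGraph H a b :=
  ⟨IsIJCompGraph.of_iso_s16 f.symm, IsIJCompGraph.of_iso_s16 f⟩

variable [Finite V]

lemma IsIJCompGraph.ncard_le_of_isIndepSet (h : IsIJCompGraph G a b) {v : V} {s : Set V}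
    (hsv : s ⊆ G.neighborSet v) (hs : G.IsIndepSet s) : s.ncard ≤ b := by
  obtain ⟨D, ⟨-, -, hout⟩, rfl⟩ := h
  have hprey : ∀ u ∈ s, ∃ w, D v w ∧ D u w := fun u hu => (hsv hu).2
  choose! prey hprey_v hprey_u using hprey
  refine (ncard_le_ncard_of_injOn prey hprey_v ?_ (toFinite _)).trans (hout v)
  intro u hu u' hu' heq
  by_contra hne
  exact hs hu hu' hne ⟨hne, prey u, hprey_u u hu, heq ▸ hprey_u u' hu'⟩

lemma IsIJCompGraph.ncard_neighborSet_le (h : IsIJCompGraph G a b) (v : V) :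
    (G.neighborSet v).ncard ≤ (a - 1) * b := by
  obtain ⟨D, ⟨-, hin, hout⟩, rfl⟩ := h
  set prey := (toFinite {w | D v w}).toFinset
  have hsub : (compGraph D).neighborSet v ⊆ ⋃ w ∈ prey, {u | D u w} \ {v} := by
    rintro u ⟨hne, w, hvw, huw⟩
    exact mem_biUnion (by simpa [prey] using hvw) ⟨huw, hne.symm⟩
  have hcompetitors : ∀ w ∈ prey, ({u | D u w} \ {v}).ncard ≤ a - 1 := by
    intro w hw
    rw [ncard_sdiff_singleton_of_mem (by simpa [prey] using hw)]
    exact Nat.sub_le_sub_right (hin w) 1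
  calc ((compGraph D).neighborSet v).ncard
      ≤ ∑ w ∈ prey, ({u | D u w} \ {v}).ncard :=
        (ncard_le_ncard hsub (toFinite _)).trans (prey.set_ncard_biUnion_le _)
    _ ≤ prey.card * (a - 1) := Finset.sum_le_card_nsmul _ _ _ hcompetitors
    _ ≤ (a - 1) * b := by
        rw [mul_comm]
        exact Nat.mul_le_mul_left _ ((ncard_eq_toFinset_card _ _).symm.trans_le (hout v))

end General

section StarOfCliques

/-- Vertices of the star of cliques are `Option (Fin j × Fin c)`: `none` is the centre, and the
`t`-th clique consists of the centre and the vertices `some (t, x)`. -/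
def InClique {j c : ℕ} (t : Fin j) (p : Option (Fin j × Fin c)) : Prop := ∀ r ∈ p, r.1 = t

/-- The graph `G*_{c+1,j}`. -/
def starOfCliques (c j : ℕ) : SimpleGraph (Option (Fin j × Fin c)) where
  Adj p q := p ≠ q ∧ ∃ t, InClique t p ∧ InClique t q
  symm := by
    constructor
    rintro p q ⟨hne, t, hp, hq⟩
    exact ⟨hne.symm, t, hq, hp⟩
  loopless := by
    constructor
    rintro p ⟨hne, -⟩
    exact hne rfl

variable {a c j : ℕ}

@[simp]
lemma starOfCliques_adj {p q : Option (Fin j × Fin c)} :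
    (starOfCliques c j).Adj p q ↔ p ≠ q ∧ ∃ t, InClique t p ∧ InClique t q :=
  Iff.rfl

lemma setOf_inClique (t : Fin j) :
    {p : Option (Fin j × Fin c) | InClique t p} = range (Option.map (Prod.mk t)) := by
  ext (_ | ⟨s, x⟩) <;> simp [InClique, eq_comm]

lemma starOfCliques_adj_none (t : Fin j) (x : Fin c) :
    (starOfCliques c j).Adj none (some (t, x)) :=
  starOfCliques_adj.2 ⟨(Option.some_ne_none _).symm, t, by simp [InClique], by simp [InClique]⟩

lemma starOfCliques_neighborSet_none : (starOfCliques c j).neighborSet none = range some := by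
  ext (_ | ⟨t, x⟩)
  · simp
  · simpa using starOfCliques_adj_none t x

lemma starOfCliques_isIndepSet (x : Fin c) :
    (starOfCliques c j).IsIndepSet (range fun t => some (t, x)) := by
  rintro _ ⟨s, rfl⟩ _ ⟨t, rfl⟩ hst hadj
  obtain ⟨-, r, hs, ht⟩ := starOfCliques_adj.1 hadj
  obtain rfl : s = t := (hs _ rfl).trans (ht _ rfl).symm
  exact hst rfl

lemma starOfCliques_not_isIJCompGraph_of_lt {k l : ℕ} (hl : l < j) :
    ¬ IsIJCompGraph (starOfCliques (c + 1) j) k l := fun h => by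
  have hsub : (range fun t : Fin j => some (t, (0 : Fin (c + 1)))) ⊆
      (starOfCliques (c + 1) j).neighborSet none := by
    rintro _ ⟨t, rfl⟩
    exact starOfCliques_adj_none t 0
  have := h.ncard_le_of_isIndepSet hsub (starOfCliques_isIndepSet 0)
  rw [ncard_range_of_injective (fun s t h => by simpa using h), Nat.card_fin] at this
  omega

lemma starOfCliques_not_isIJCompGraph_of_mul_lt {m n : ℕ} (hmn : (m - 1) * n < c * j) :
    ¬ IsIJCompGraph (starOfCliques c j) m n := fun h => by
  have := h.ncard_neighborSet_le none
  rw [starOfCliques_neighborSet_none, ncard_range_of_injective (Option.some_injective _),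
    Nat.card_prod, Nat.card_fin, Nat.card_fin, mul_comm] at this
  exact this.not_gt hmn

def starOfCliquesDigraph (a j : ℕ) [NeZero j] (p q : Option (Fin j × Fin (a + 1))) : Prop :=
  ∃ t, q = some (t + 1, 0) ∧ InClique t p

section Digraph

variable [NeZero j]

lemma isIJDigraph_starOfCliquesDigraph (hj : 2 ≤ j) :
    IsIJDigraph (starOfCliquesDigraph a j) (a + 2) j := by
  refine ⟨?_, fun q => ?_, fun p => ?_⟩
  · rintro p ⟨t, rfl, hp⟩
    have : j = 1 := Fin.one_eq_zero_iff.1 (add_eq_left.1 (hp _ rfl))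
    omega
  · by_cases hq : ∃ t : Fin j, q = some (t + 1, 0)
    · obtain ⟨t, rfl⟩ := hq
      have hin : {p | starOfCliquesDigraph a j p (some (t + 1, 0))} = {p | InClique t p} := by
        ext p
        simp [starOfCliquesDigraph]
      rw [hin, setOf_inClique,
        ncard_range_of_injective (Option.map_injective (Prod.mk_right_injective t))]
      simp
    · have hempty : {p | starOfCliquesDigraph a j p q} = ∅ :=
        eq_empty_of_forall_notMem fun p ⟨t, ht, _⟩ => hq ⟨t, ht⟩
      simp [hempty]
  · calc {w | starOfCliquesDigraph a j p w}.ncard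
        ≤ (range fun t : Fin j => some (t + 1, (0 : Fin (a + 1)))).ncard :=
          ncard_le_ncard (fun w ⟨t, hw, _⟩ => ⟨t, hw.symm⟩) (toFinite _)
      _ = j := by
          rw [ncard_range_of_injective (fun s t h => by simpa using h)]
          simp

lemma compGraph_starOfCliquesDigraph :
    compGraph (starOfCliquesDigraph a j) = starOfCliques (a + 1) j := by
  ext p q
  rw [compGraph_adj, starOfCliques_adj]
  refine and_congr_right fun _ =>
    ⟨?_, fun ⟨t, hp, hq⟩ => ⟨_, ⟨t, rfl, hp⟩, ⟨t, rfl, hq⟩⟩⟩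
  rintro ⟨_, ⟨s, rfl, hp⟩, ⟨t, hst, hq⟩⟩
  obtain rfl : s = t := by simpa using hst
  exact ⟨s, hp, hq⟩

end Digraph

lemma starOfCliques_isIJCompGraph (hj : 2 ≤ j) :
    IsIJCompGraph (starOfCliques (a + 1) j) (a + 2) j :=
  have : NeZero j := ⟨by omega⟩
  ⟨_, isIJDigraph_starOfCliquesDigraph hj, compGraph_starOfCliquesDigraph⟩

end StarOfCliques

theorem stmt16_general (i j k l m n : ℕ) (hj : 2 ≤ j) (hl : l < j) (hmn : (m - 1) * n < (i - 1) * j) :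
    ∃ (N : ℕ) (G : SimpleGraph (Fin N)),
      IsIJCompGraph G i j ∧ ¬ IsIJCompGraph G k l ∧ ¬ IsIJCompGraph G m n := by
  obtain ⟨a, rfl⟩ : ∃ a, i = a + 2 := by
    rcases i with _ | _ | a
    · simp at hmn
    · simp at hmn
    · exact ⟨a, rfl⟩
  let e := (starOfCliques (a + 1) j).overFinIso rfl
  exact ⟨_, _, e.isIJCompGraph_iff.1 (starOfCliques_isIJCompGraph hj),
    mt e.isIJCompGraph_iff.2 (starOfCliques_not_isIJCompGraph_of_lt hl),
    mt e.isIJCompGraph_iff.2 (starOfCliques_not_isIJCompGraph_of_mul_lt hmn)⟩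

theorem stmt16 (i j k l m n : ℕ) (hk : 1 ≤ k) (hm : 1 ≤ m)
    (hi : 2 ≤ i) (hj : 2 ≤ j) (hl : l < j) (hmn : (m - 1) * n < (i - 1) * j) :
    ∃ (N : ℕ) (G : SimpleGraph (Fin N)),
      IsIJCompGraph G i j ∧ ¬ IsIJCompGraph G k l ∧ ¬ IsIJCompGraph G m n :=
  stmt16_general i j k l m n hj hl hmn
end

section
/- Let i, j, k, l be positive integers with i > k² − k + 1. Then the disjoint union of two complete graphs K_i is an ⟨i,j⟩ competition graph but is not a ⟨k,l⟩ competition graph; hence the family of ⟨i,j⟩ competition graphs is not contained in the family of ⟨k,l⟩ competition graphs. -/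
/-- The disjoint union of two complete graphs on i vertices. -/
def twoCompleteGraphs (i : ℕ) : SimpleGraph (Fin 2 × Fin i) where
  Adj a b := a.1 = b.1 ∧ a.2 ≠ b.2
  symm := by
    constructor
    rintro a b ⟨h1, h2⟩
    exact ⟨h1.symm, h2.symm⟩
  loopless := by
    constructor
    rintro a ⟨-, h⟩
    exact h rfl

/-!
Each vertex of `K_i ⊔ K_i` points to one fixed vertex of the other clique; this digraph has
indegrees `i` and outdegrees `1`, and its competition graph is `K_i ⊔ K_i`.
Conversely, in a digraph with indegrees at most `k`, every ordered pair of adjacent vertices of the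
competition graph is an ordered pair of distinct in-neighbours of some vertex, so there are at most
`k (k - 1) n` such pairs on `n` vertices. `K_i ⊔ K_i` has `2 i (i - 1)` of them on `2 i` vertices,
which forces `i - 1 ≤ k (k - 1)`.
-/

open Finset

instance (i : ℕ) : DecidableRel (twoCompleteGraphs i).Adj :=
  fun a b => inferInstanceAs (Decidable (a.1 = b.1 ∧ a.2 ≠ b.2))

lemma IsIJCompGraph.card_adj_le {V : Type*} [Fintype V] {G : SimpleGraph V}
    [DecidableRel G.Adj] {k l : ℕ} (hG : IsIJCompGraph G k l) :
    #{p : V × V | G.Adj p.1 p.2} ≤ k * (k - 1) * Fintype.card V := by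
  classical
  obtain ⟨D, ⟨-, hin, -⟩, rfl⟩ := hG
  let N : V → Finset V := fun w => {u | D u w}
  have hN : ∀ w, #(N w) ≤ k := fun w => by simpa [N, ← Set.ncard_coe_finset] using hin w
  have hcover : univ.filter (fun p : V × V => (compGraph D).Adj p.1 p.2) ⊆
      univ.biUnion fun w => (N w).offDiag := by
    rintro ⟨u, v⟩ hp
    obtain ⟨huv, w, hu, hv⟩ := (mem_filter.1 hp).2
    exact mem_biUnion.2 ⟨w, mem_univ w, mem_offDiag.2 ⟨by simpa [N], by simpa [N], huv⟩⟩
  calc #{p : V × V | (compGraph D).Adj p.1 p.2}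
      ≤ ∑ w, #(N w).offDiag := (card_le_card hcover).trans card_biUnion_le
    _ ≤ Fintype.card V • (k * (k - 1)) := sum_le_card_nsmul _ _ _ fun w _ => by
        rw [offDiag_card, ← Nat.mul_sub_one]
        exact Nat.mul_le_mul (hN w) (Nat.sub_le_sub_right (hN w) 1)
    _ = k * (k - 1) * Fintype.card V := by rw [smul_eq_mul, mul_comm]

lemma two_mul_card_offDiag_le_card_adj_twoCompleteGraphs (i : ℕ) :
    2 * (i * i - i) ≤
      #{p : (Fin 2 × Fin i) × (Fin 2 × Fin i) | (twoCompleteGraphs i).Adj p.1 p.2} :=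
  calc 2 * (i * i - i) = #((univ : Finset (Fin 2)) ×ˢ (univ : Finset (Fin i)).offDiag) := by
        simp [offDiag_card]
    _ ≤ _ := card_le_card_of_injOn (fun q => ((q.1, q.2.1), (q.1, q.2.2)))
        (fun q hq => mem_coe.2 (mem_filter.2 ⟨mem_univ _, rfl, by simpa using hq⟩))
        fun q _ q' _ h => by simp_all [Prod.ext_iff]

lemma twoCompleteGraphs_isIJCompGraph (i : ℕ) {j : ℕ} (hj : 1 ≤ j) :
    IsIJCompGraph (twoCompleteGraphs i) i j := by
  refine ⟨fun u v => u.1 ≠ v.1 ∧ v.2.val = 0, ⟨fun v hv => hv.1 rfl, fun v => ?_, fun u => ?_⟩, ?_⟩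
  · calc {u | u.1 ≠ v.1 ∧ v.2.val = 0}.ncard ≤ (Set.univ : Set (Fin i)).ncard :=
          Set.ncard_le_ncard_of_injOn Prod.snd (fun _ _ => trivial)
            fun u ⟨hu, _⟩ u' ⟨hu', _⟩ h => Prod.ext (by omega) h
      _ = i := by simp
  · refine le_trans ((Set.ncard_le_one_iff).2 fun {w w'} ⟨hw, hw0⟩ ⟨hw', hw0'⟩ => ?_) hj
    exact Prod.ext (by omega) (Fin.ext (hw0.trans hw0'.symm))
  · ext u v
    refine ⟨fun ⟨huv, w, ⟨hu, _⟩, ⟨hv, _⟩⟩ => ⟨by omega, fun h => huv (Prod.ext (by omega) h)⟩,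
      fun ⟨h1, h2⟩ => ⟨fun h => h2 (congrArg Prod.snd h), (u.1 + 1, ⟨0, u.2.pos⟩), ?_⟩⟩
    simp only [ne_eq, and_true, ← h1]
    omega

lemma twoCompleteGraphs_not_isIJCompGraph {i k l : ℕ} (h : k ^ 2 - k + 1 < i) :
    ¬ IsIJCompGraph (twoCompleteGraphs i) k l := by
  intro hG
  have hpairs := (two_mul_card_offDiag_le_card_adj_twoCompleteGraphs i).trans hG.card_adj_le
  rw [Fintype.card_prod, Fintype.card_fin, Fintype.card_fin, ← Nat.mul_sub_one] at hpairs
  have hle : i - 1 ≤ k * (k - 1) :=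
    Nat.le_of_mul_le_mul_left (by linarith) (show 0 < 2 * i by omega)
  rw [Nat.mul_sub_one, ← sq] at hle
  omega

theorem stmt17_general (i j k l : ℕ) (hj : 1 ≤ j) (h : k ^ 2 - k + 1 < i) :
    IsIJCompGraph (twoCompleteGraphs i) i j ∧
      ¬ IsIJCompGraph (twoCompleteGraphs i) k l :=
  ⟨twoCompleteGraphs_isIJCompGraph i hj, twoCompleteGraphs_not_isIJCompGraph h⟩

theorem stmt17 (i j k l : ℕ) (hj : 1 ≤ j) (hk : 1 ≤ k) (hl : 1 ≤ l)
    (h : k ^ 2 - k + 1 < i) :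
    IsIJCompGraph (twoCompleteGraphs i) i j ∧
      ¬ IsIJCompGraph (twoCompleteGraphs i) k l :=
  stmt17_general i j k l hj h
end

section
/- Let k ≥ 2 be an integer and let G be the graph with vertex set [k+1]^k (k-tuples with entries in {1,...,k+1}) in which two tuples are adjacent iff they differ in exactly one coordinate. Then G is a ⟨k+1,k⟩ competition graph, G is k²-regular, and |E(G)|/|V(G)| = k²/2 > k(k−1)/2; consequently G is not a ⟨k,l⟩ competition graph for any positive integer l. -/
/-- The Hamming graph on (k+1)-ary k-tuples: adjacent iff they differ in exactly
one coordinate. -/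
def hammingGraph (k : ℕ) : SimpleGraph (Fin k → Fin (k + 1)) where
  Adj x y := hammingDist x y = 1
  symm := by
    constructor
    intro x y h
    rwa [hammingDist_comm]
  loopless := by
    constructor
    intro x h
    simp [hammingDist_self] at h

/-!
Competition representation: fix an injection `e : ι → R` and, for each coordinate `i`, another
coordinate `σ i ≠ i`. Let `x` prey on `x + δ_{σ i} + c δ_i` for every `i`, where `c` is chosen so
that the prey has coordinate sum `e i`. The prey depends only on `x` off coordinate `i` and its
coordinate sum recovers `i`, so two tuples share a prey iff they differ in exactly one coordinate.
Each tuple has `|ι|` prey, and the predators of a prey differ only in the recovered coordinate, so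
there are at most `|R|` of them. For `ι = Fin k`, `R = Fin (k + 1)`, `e = castSucc` this
represents the Hamming graph as a `⟨k + 1, k⟩` competition graph.

Conversely, in an `⟨i, j⟩` competition graph every ordered pair of adjacent vertices is an
ordered pair of distinct in-neighbours of some vertex, so `2|E| ≤ i (i - 1) |V|`; the
`k²`-regular Hamming graph violates this for `i = k`.
-/

open Finset

section Hamming

variable {ι β : Type*} [Fintype ι] [DecidableEq ι] [DecidableEq β]

theorem hammingDist_eq_one_iff {x y : ι → β} :
    hammingDist x y = 1 ↔ ∃ i, x i ≠ y i ∧ ∀ j ≠ i, x j = y j := by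
  simp only [hammingDist, card_eq_one, eq_singleton_iff_unique_mem, mem_filter, mem_univ,
    true_and]
  refine exists_congr fun i => and_congr_right fun _ => forall_congr' fun j => ?_
  tauto

theorem hammingDist_eq_one_iff_ne_and_exists {x y : ι → β} :
    hammingDist x y = 1 ↔ x ≠ y ∧ ∃ i, ∀ j ≠ i, x j = y j := by
  rw [hammingDist_eq_one_iff]
  constructor
  · rintro ⟨i, hi, hoff⟩
    exact ⟨fun h => hi (congrFun h i), i, hoff⟩
  · rintro ⟨hne, i, hoff⟩
    refine ⟨i, fun hi => hne (funext fun j => ?_), hoff⟩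
    rcases eq_or_ne j i with rfl | hj
    exacts [hi, hoff j hj]

theorem hammingDist_eq_one_iff_exists_update {x y : ι → β} :
    hammingDist x y = 1 ↔ ∃ i b, b ≠ x i ∧ Function.update x i b = y := by
  rw [hammingDist_eq_one_iff]
  constructor
  · rintro ⟨i, hi, hoff⟩
    refine ⟨i, y i, Ne.symm hi, funext fun j => ?_⟩
    rcases eq_or_ne j i with rfl | hj
    · simp
    · simp [hj, hoff j hj]
  · rintro ⟨i, b, hb, rfl⟩
    exact ⟨i, by simpa using hb.symm, fun j hj => by simp [hj]⟩

theorem ncard_setOf_hammingDist_eq_one [Fintype β] (x : ι → β) :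
    {y | hammingDist x y = 1}.ncard = Fintype.card ι * (Fintype.card β - 1) := by
  let f : (Σ i, {b // b ≠ x i}) → ι → β := fun p => Function.update x p.1 p.2
  have hf : Function.Injective f := by
    rintro ⟨i, b, hb⟩ ⟨j, c, hc⟩ h
    obtain rfl : i = j := by
      by_contra hij
      exact hb (by simpa [f, Function.update_of_ne hij] using congrFun h i)
    simpa [f] using congrFun h i
  have hrange : {y | hammingDist x y = 1} = Set.range f := by
    ext y
    simp [hammingDist_eq_one_iff_exists_update, f]
  rw [hrange, Set.ncard_range_of_injective hf, Nat.card_eq_fintype_card, Fintype.card_sigma]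
  simp

end Hamming

section Prey

variable {ι R : Type*} [Nontrivial ι]

noncomputable def otherIndex (i : ι) : ι := (exists_ne i).choose

theorem otherIndex_ne (i : ι) : otherIndex i ≠ i := (exists_ne i).choose_spec

variable [Fintype ι] [DecidableEq ι] [Ring R]

noncomputable def hammingPrey (e : ι → R) (i : ι) (x : ι → R) : ι → R :=
  x + Pi.single (otherIndex i) 1 + Pi.single i (e i - 1 - ∑ j, x j)

variable (e : ι → R)

theorem sum_hammingPrey (i : ι) (x : ι → R) : ∑ m, hammingPrey e i x m = e i := by
  simp only [hammingPrey, Pi.add_apply, sum_add_distrib, sum_pi_single', mem_univ, if_true]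
  abel

theorem hammingPrey_apply_of_ne {i m : ι} (hm : m ≠ i) (x : ι → R) :
    hammingPrey e i x m = x m + (Pi.single (otherIndex i) 1 : ι → R) m := by
  simp [hammingPrey, hm]

theorem hammingPrey_add_single (i : ι) (x : ι → R) (d : R) :
    hammingPrey e i (x + Pi.single i d) = hammingPrey e i x := by
  simp only [hammingPrey, Pi.add_apply, sum_add_distrib, sum_pi_single', mem_univ, if_true]
  rw [show e i - 1 - (∑ j, x j + d) = e i - 1 - ∑ j, x j - d by abel, Pi.single_sub]
  abel

theorem hammingPrey_eq_hammingPrey_iff (he : Function.Injective e) {i j : ι} {x y : ι → R} :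
    hammingPrey e i x = hammingPrey e j y ↔ i = j ∧ ∀ m ≠ i, x m = y m := by
  constructor
  · intro h
    obtain rfl : i = j := he (by rw [← sum_hammingPrey e i x, h, sum_hammingPrey])
    refine ⟨rfl, fun m hm => ?_⟩
    simpa [hammingPrey_apply_of_ne e hm] using congrFun h m
  · rintro ⟨rfl, hoff⟩
    have hy : y = x + Pi.single i (y i - x i) := by
      funext m
      rcases eq_or_ne m i with rfl | hm
      · simp
      · simp [hm, hoff m hm]
    rw [hy, hammingPrey_add_single]

theorem hammingPrey_ne [Nontrivial R] (i : ι) (x : ι → R) : hammingPrey e i x ≠ x := by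
  intro h
  simpa [hammingPrey_apply_of_ne e (otherIndex_ne i)] using congrFun h (otherIndex i)

def hammingPreyRel (x y : ι → R) : Prop := ∃ i, hammingPrey e i x = y

theorem compGraph_hammingPreyRel_adj [DecidableEq R] (he : Function.Injective e) {x y : ι → R} :
    (compGraph (hammingPreyRel e)).Adj x y ↔ hammingDist x y = 1 := by
  rw [hammingDist_eq_one_iff_ne_and_exists]
  refine and_congr_right fun _ => ⟨?_, ?_⟩
  · rintro ⟨w, ⟨i, rfl⟩, j, hj⟩
    exact ⟨i, ((hammingPrey_eq_hammingPrey_iff e he).1 hj.symm).2⟩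
  · rintro ⟨i, hoff⟩
    exact ⟨_, ⟨i, rfl⟩, i, ((hammingPrey_eq_hammingPrey_iff e he).2 ⟨rfl, hoff⟩).symm⟩

theorem isIJDigraph_hammingPreyRel [Fintype R] [Nontrivial R] (he : Function.Injective e) :
    IsIJDigraph (hammingPreyRel e) (Fintype.card R) (Fintype.card ι) := by
  refine ⟨fun x ⟨i, h⟩ => hammingPrey_ne e i x h, fun y => ?_, fun x => ?_⟩
  · rcases Set.eq_empty_or_nonempty {u | hammingPreyRel e u y} with h | ⟨u₀, i₀, h₀⟩
    · simp [h]
    have hinj : Set.InjOn (fun u => u i₀) {u | hammingPreyRel e u y} := by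
      rintro u ⟨i, hu⟩ u' ⟨i', hu'⟩ h
      obtain ⟨rfl, hoff⟩ := (hammingPrey_eq_hammingPrey_iff e he).1 (h₀.trans hu.symm)
      obtain ⟨rfl, hoff'⟩ := (hammingPrey_eq_hammingPrey_iff e he).1 (h₀.trans hu'.symm)
      funext m
      rcases eq_or_ne m i₀ with rfl | hm
      exacts [h, (hoff m hm).symm.trans (hoff' m hm)]
    simpa using Set.ncard_le_ncard_of_injOn _ (fun _ _ => Set.mem_univ _) hinj
  · calc {w | hammingPreyRel e x w}.ncard
        = Nat.card (Set.range fun i => hammingPrey e i x) := (Nat.card_coe_set_eq _).symm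
      _ ≤ Fintype.card ι := (Finite.card_range_le _).trans_eq Nat.card_eq_fintype_card

end Prey

theorem card_dart_compGraph_le {V : Type*} [Fintype V] [DecidableEq V] (D : V → V → Prop)
    [DecidableRel (compGraph D).Adj] {i : ℕ} (hin : ∀ v, {u | D u v}.ncard ≤ i) :
    Fintype.card (compGraph D).Dart ≤ i * (i - 1) * Fintype.card V := by
  classical
  let pred (w : V) : Finset V := univ.filter (D · w)
  have hpred (w : V) : #(pred w) ≤ i := by simpa [pred, ← Set.ncard_coe_finset] using hin w
  have hsub : (univ : Finset (compGraph D).Dart).image SimpleGraph.Dart.toProd ⊆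
      univ.biUnion fun w => (pred w).offDiag := by
    intro p hp
    obtain ⟨d, -, rfl⟩ := mem_image.1 hp
    obtain ⟨hne, w, hu, hv⟩ := d.adj
    exact mem_biUnion.2 ⟨w, mem_univ _, mem_offDiag.2 ⟨by simpa [pred], by simpa [pred], hne⟩⟩
  calc Fintype.card (compGraph D).Dart
      = #((univ : Finset (compGraph D).Dart).image SimpleGraph.Dart.toProd) :=
        (card_image_of_injective _ SimpleGraph.Dart.toProd_injective).symm
    _ ≤ ∑ w, #(pred w).offDiag := (card_le_card hsub).trans card_biUnion_le
    _ ≤ ∑ _w : V, i * (i - 1) := sum_le_sum fun w _ => by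
        rw [offDiag_card, ← Nat.mul_sub_one]
        exact Nat.mul_le_mul (hpred w) (Nat.sub_le_sub_right (hpred w) 1)
    _ = i * (i - 1) * Fintype.card V := by simp [mul_comm]

theorem IsIJCompGraph.two_mul_ncard_edgeSet_le {V : Type*} [Fintype V] {G : SimpleGraph V}
    {i j : ℕ} (h : IsIJCompGraph G i j) :
    2 * G.edgeSet.ncard ≤ i * (i - 1) * Fintype.card V := by
  classical
  obtain ⟨D, ⟨-, hin, -⟩, rfl⟩ := h
  rw [← SimpleGraph.coe_edgeFinset, Set.ncard_coe_finset,
    ← SimpleGraph.dart_card_eq_twice_card_edges]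
  exact card_dart_compGraph_le D hin

theorem ncard_neighborSet_hammingGraph (k : ℕ) (v : Fin k → Fin (k + 1)) :
    ((hammingGraph k).neighborSet v).ncard = k ^ 2 := by
  rw [show (hammingGraph k).neighborSet v = {y | hammingDist v y = 1} from rfl,
    ncard_setOf_hammingDist_eq_one]
  simp [sq]

theorem two_mul_ncard_edgeSet_hammingGraph (k : ℕ) :
    2 * (hammingGraph k).edgeSet.ncard = k ^ 2 * Fintype.card (Fin k → Fin (k + 1)) := by
  classical
  have hdeg (v : Fin k → Fin (k + 1)) : (hammingGraph k).degree v = k ^ 2 := by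
    rw [← SimpleGraph.card_neighborSet_eq_degree, ← Nat.card_eq_fintype_card,
      Nat.card_coe_set_eq, ncard_neighborSet_hammingGraph]
  rw [← SimpleGraph.coe_edgeFinset, Set.ncard_coe_finset,
    ← SimpleGraph.sum_degrees_eq_twice_card_edges, sum_const_nat fun v _ => hdeg v, card_univ,
    mul_comm]

open Fin.CommRing in
theorem isIJCompGraph_hammingGraph {k : ℕ} (hk : 2 ≤ k) :
    IsIJCompGraph (hammingGraph k) (k + 1) k := by
  have : Nontrivial (Fin k) := Fin.nontrivial_iff_two_le.2 hk
  have : Nontrivial (Fin (k + 1)) := Fin.nontrivial_iff_two_le.2 (by omega)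
  refine ⟨hammingPreyRel (Fin.castSucc : Fin k → Fin (k + 1)), ?_, ?_⟩
  · simpa using isIJDigraph_hammingPreyRel _ (Fin.castSucc_injective k)
  · ext x y
    exact compGraph_hammingPreyRel_adj _ (Fin.castSucc_injective k)

theorem stmt18 (k : ℕ) (hk : 2 ≤ k) :
    IsIJCompGraph (hammingGraph k) (k + 1) k ∧
      (∀ v, ((hammingGraph k).neighborSet v).ncard = k ^ 2) ∧
      2 * (hammingGraph k).edgeSet.ncard =
        k ^ 2 * Fintype.card (Fin k → Fin (k + 1)) ∧
      k * (k - 1) < k ^ 2 ∧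
      (∀ l : ℕ, 1 ≤ l → ¬ IsIJCompGraph (hammingGraph k) k l) := by
  have hlt : k * (k - 1) < k ^ 2 := by
    rw [sq]
    exact Nat.mul_lt_mul_of_pos_left (by omega) (by omega)
  refine ⟨isIJCompGraph_hammingGraph hk, ncard_neighborSet_hammingGraph k,
    two_mul_ncard_edgeSet_hammingGraph k, hlt, fun l _ h => ?_⟩
  have hle := h.two_mul_ncard_edgeSet_le
  rw [two_mul_ncard_edgeSet_hammingGraph] at hle
  exact (Nat.mul_lt_mul_of_pos_right hlt Fintype.card_pos).not_ge hle
end
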